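/- arXiv:2111.04181 — 2 statements merged into one kernel-verified Lean document; each statement's English description precedes it below -/
import Mathlib

section
/- Let C be a set of binary codewords of length p such that any two distinct codewords have Hamming distance at least (1/2 - ε)·p. Then any three pairwise distinct codewords in C agree simultaneously on at most (1/4 + (3/2)ε)·p coordinate positions. -/
theorem stmt0 (p : ℕ) (hp : 0 < p) (ε : ℚ) (hε : 0 ≤ ε)
    (C : Finset (Fin p → Bool))
    (hdist : ∀ c₁ ∈ C, ∀ c₂ ∈ C, c₁ ≠ c₂ → ((1/2 - ε) * p : ℚ) ≤ hammingDist c₁ c₂)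
    (c₁ c₂ c₃ : Fin p → Bool) (h₁ : c₁ ∈ C) (h₂ : c₂ ∈ C) (h₃ : c₃ ∈ C)
    (h12 : c₁ ≠ c₂) (h13 : c₁ ≠ c₃) (h23 : c₂ ≠ c₃) :
    ((Finset.univ.filter fun ℓ => c₁ ℓ = c₂ ℓ ∧ c₂ ℓ = c₃ ℓ).card : ℚ)
      ≤ (1/4 + 3/2 * ε) * p := by
  have key : hammingDist c₁ c₂ + hammingDist c₁ c₃ + hammingDist c₂ c₃
      + 2 * (Finset.univ.filter fun ℓ => c₁ ℓ = c₂ ℓ ∧ c₂ ℓ = c₃ ℓ).card = 2 * p := by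
    simp only [hammingDist, Finset.card_filter]
    rw [← Finset.sum_add_distrib, ← Finset.sum_add_distrib, Finset.mul_sum,
      ← Finset.sum_add_distrib]
    have : ∀ ℓ : Fin p,
        ((if c₁ ℓ ≠ c₂ ℓ then 1 else 0) + (if c₁ ℓ ≠ c₃ ℓ then 1 else 0)
          + (if c₂ ℓ ≠ c₃ ℓ then 1 else 0)
          + 2 * (if c₁ ℓ = c₂ ℓ ∧ c₂ ℓ = c₃ ℓ then 1 else 0) : ℕ) = 2 := by
      intro ℓ
      rcases Bool.dichotomy (c₁ ℓ) with h1 | h1 <;>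
        rcases Bool.dichotomy (c₂ ℓ) with h2 | h2 <;>
        rcases Bool.dichotomy (c₃ ℓ) with h3 | h3 <;> simp [h1, h2, h3]
    rw [Finset.sum_congr rfl fun ℓ _ => this ℓ]
    simp [mul_comm]
  have d12 := hdist c₁ h₁ c₂ h₂ h12
  have d13 := hdist c₁ h₁ c₃ h₃ h13
  have d23 := hdist c₂ h₂ c₃ h₃ h23
  have keyQ : (hammingDist c₁ c₂ : ℚ) + hammingDist c₁ c₃ + hammingDist c₂ c₃
      + 2 * ((Finset.univ.filter fun ℓ => c₁ ℓ = c₂ ℓ ∧ c₂ ℓ = c₃ ℓ).card : ℚ) = 2 * p := by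
    exact_mod_cast congrArg (Nat.cast : ℕ → ℚ) key
  have hp' : (0:ℚ) ≤ p := by positivity
  linarith
end

section
/- Let C be a set of binary codewords of length p with pairwise Hamming distance at least (1/2 - ε)·p, and let S ⊆ Fin p be a set of positions of size greater than (1/4 + (3/2)ε)·p. Then at most two codewords of C can agree with any fixed partial word on all positions of S. Equivalently: there do not exist three distinct codewords in C that all agree with each other on every position in S. -/
theorem stmt1 (p : ℕ) (hp : 0 < p) (ε : ℚ) (hε : 0 ≤ ε)
    (C : Finset (Fin p → Bool))
    (hdist : ∀ c₁ ∈ C, ∀ c₂ ∈ C, c₁ ≠ c₂ → ((1/2 - ε) * p : ℚ) ≤ hammingDist c₁ c₂)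
    (S : Finset (Fin p)) (hS : ((1/4 + 3/2 * ε) * p : ℚ) < S.card) :
    ¬ ∃ c₁ ∈ C, ∃ c₂ ∈ C, ∃ c₃ ∈ C,
        c₁ ≠ c₂ ∧ c₁ ≠ c₃ ∧ c₂ ≠ c₃ ∧
        (∀ ℓ ∈ S, c₁ ℓ = c₂ ℓ ∧ c₂ ℓ = c₃ ℓ) := by
  rintro ⟨c₁, h₁, c₂, h₂, c₃, h₃, h12, h13, h23, hagree⟩
  classical
  have efil : ∀ a b : Fin p → Bool, (∀ ℓ ∈ S, a ℓ = b ℓ) →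
      hammingDist a b = (Sᶜ.filter (fun i => a i ≠ b i)).card := by
    intro a b hab
    rw [hammingDist]
    congr 1
    ext i
    simp only [Finset.mem_filter, Finset.mem_univ, true_and, Finset.mem_compl]
    exact ⟨fun h => ⟨fun hi => h (hab i hi), h⟩, fun h => h.2⟩
  have e12 := efil c₁ c₂ (fun ℓ hℓ => (hagree ℓ hℓ).1)
  have e13 := efil c₁ c₃ (fun ℓ hℓ => ((hagree ℓ hℓ).1).trans (hagree ℓ hℓ).2)
  have e23 := efil c₂ c₃ (fun ℓ hℓ => (hagree ℓ hℓ).2)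
  have hsum : hammingDist c₁ c₂ + hammingDist c₁ c₃ + hammingDist c₂ c₃
      ≤ 2 * Sᶜ.card := by
    rw [e12, e13, e23, Finset.card_filter, Finset.card_filter, Finset.card_filter,
      ← Finset.sum_add_distrib, ← Finset.sum_add_distrib]
    calc (∑ i ∈ Sᶜ, ((if c₁ i ≠ c₂ i then 1 else 0) + (if c₁ i ≠ c₃ i then 1 else 0)
            + (if c₂ i ≠ c₃ i then 1 else 0)))
        ≤ ∑ _i ∈ Sᶜ, 2 := by
          apply Finset.sum_le_sum
          intro i _
          rcases Bool.eq_false_or_eq_true (c₁ i) with hb1 | hb1 <;>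
          rcases Bool.eq_false_or_eq_true (c₂ i) with hb2 | hb2 <;>
          rcases Bool.eq_false_or_eq_true (c₃ i) with hb3 | hb3 <;>
          simp [hb1, hb2, hb3]
      _ = 2 * Sᶜ.card := by rw [Finset.sum_const, smul_eq_mul, mul_comm]
  have hcompl : Sᶜ.card + S.card = p := by
    rw [Finset.card_compl]
    have := S.card_le_univ
    simp only [Finset.card_univ, Fintype.card_fin] at this ⊢
    omega
  have b12 := hdist c₁ h₁ c₂ h₂ h12
  have b13 := hdist c₁ h₁ c₃ h₃ h13
  have b23 := hdist c₂ h₂ c₃ h₃ h23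
  have hsumQ : (hammingDist c₁ c₂ + hammingDist c₁ c₃ + hammingDist c₂ c₃ : ℚ)
      ≤ 2 * ((p : ℚ) - S.card) := by
    have : hammingDist c₁ c₂ + hammingDist c₁ c₃ + hammingDist c₂ c₃ + 2 * S.card
        ≤ 2 * p := by omega
    have := (Nat.cast_le (α := ℚ)).2 this
    push_cast at this
    linarith
  linarith
end
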